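/- arXiv:2102.12662 — 2 statements merged into one kernel-verified Lean document; each statement's English description precedes it below -/
import Mathlib

section
/- Let L be a thin Lie algebra over a field of odd characteristic with dim(L_3) = dim(L_5) = 1, and let y span C_{L_1}(L_2), extended to a basis x, y of L_1. Then [y x x x y] = 0. -/
open Module

/-!
If `w = [yxxxy]` were nonzero it would span `L₅`. As `y` centralises `L₂`, the Jacobi identity
gives `[wy] = 0` and `[yxxxxy] = 2[wx]`; since `[yxxxx] ∈ L₅` is a multiple of `w`, the first
identity gives `[yxxxxy] = 0`, so `[wx] = 0` in odd characteristic. Then `w`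
centralises `L₁`, every left-normed bracket of six elements of `L₁` vanishes, and `L`, being
generated by `L₁`, is spanned by brackets of length at most five: it is finite-dimensional.
-/

/-- A thin Lie algebra structure: a grading of `L` over the positive integers
(`C 0 = ⊥`), internal direct sum, compatible with the bracket, with `L₁`
two-dimensional and generating `L`, `L` infinite-dimensional, and satisfying
the covering property: for every nonzero homogeneous `z ∈ Lᵢ`,
`span [z, L₁] = L_{i+1}`. -/
structure IsThinGraded (F : Type*) (L : Type*) [Field F] [LieRing L] [LieAlgebra F L]
    (C : ℕ → Submodule F L) : Prop where
  zero_bot : C 0 = ⊥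
  internal : DirectSum.IsInternal C
  bracket_mem : ∀ i j : ℕ, ∀ u ∈ C i, ∀ v ∈ C j, ⁅u, v⁆ ∈ C (i + j)
  dim_one : Module.finrank F (C 1) = 2
  generates : LieSubalgebra.lieSpan F L ((C 1 : Submodule F L) : Set L) = ⊤
  infinite_dim : ¬ Module.Finite F L
  covering : ∀ i : ℕ, ∀ z ∈ C i, z ≠ 0 →
    Submodule.span F {w : L | ∃ a ∈ C 1, w = ⁅z, a⁆} = C (i + 1)

section LeftNormed

variable {R L : Type*} [CommRing R] [LieRing L] [LieAlgebra R L] (V : Submodule R L)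

/-- `leftNormedSpan V n` is spanned by the left-normed brackets `[v₀ v₁ ⋯ vₙ]` of `n + 1`
elements of `V`. -/
def leftNormedSpan : ℕ → Submodule R L
  | 0 => V
  | n + 1 => Submodule.map₂ (LieAlgebra.ad R L : L →ₗ[R] Module.End R L) (leftNormedSpan n) V

variable {V}

theorem lie_mem_leftNormedSpan_succ {n : ℕ} {u v : L} (hu : u ∈ leftNormedSpan V n)
    (hv : v ∈ V) : ⁅u, v⁆ ∈ leftNormedSpan V (n + 1) :=
  Submodule.apply_mem_map₂ _ hu hv

theorem lie_mem_leftNormedSpan {i j : ℕ} {u v : L} (hu : u ∈ leftNormedSpan V i)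
    (hv : v ∈ leftNormedSpan V j) : ⁅u, v⁆ ∈ leftNormedSpan V (i + j + 1) := by
  induction j generalizing i u v with
  | zero => exact lie_mem_leftNormedSpan_succ hu hv
  | succ j ih =>
    have hle : leftNormedSpan V (j + 1) ≤
        (leftNormedSpan V (i + (j + 1) + 1)).comap
          ((LieAlgebra.ad R L : L →ₗ[R] Module.End R L) u) := by
      refine Submodule.map₂_le.2 fun s hs a ha => ?_
      change ⁅u, ⁅s, a⁆⁆ ∈ leftNormedSpan V (i + (j + 1) + 1)
      rw [leibniz_lie, ← lie_skew s]
      refine add_mem ?_ (neg_mem ?_)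
      · exact lie_mem_leftNormedSpan_succ (ih hu hs) ha
      · convert ih (lie_mem_leftNormedSpan_succ hu ha) hs using 2
        omega
    exact hle hv

theorem lie_mem_iSup_leftNormedSpan {u v : L} (hu : u ∈ ⨆ n, leftNormedSpan V n)
    (hv : v ∈ ⨆ n, leftNormedSpan V n) : ⁅u, v⁆ ∈ ⨆ n, leftNormedSpan V n := by
  have hle : Submodule.map₂ (LieAlgebra.ad R L : L →ₗ[R] Module.End R L)
      (⨆ n, leftNormedSpan V n) (⨆ n, leftNormedSpan V n) ≤ ⨆ n, leftNormedSpan V n := by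
    simp only [Submodule.map₂_iSup_left, Submodule.map₂_iSup_right, iSup_le_iff]
    exact fun j i => Submodule.map₂_le.2 fun u hu v hv =>
      Submodule.mem_iSup_of_mem (i + j + 1) (lie_mem_leftNormedSpan hu hv)
  exact hle (Submodule.apply_mem_map₂ _ hu hv)

theorem lieSpan_le_iSup_leftNormedSpan :
    (LieSubalgebra.lieSpan R L (V : Set L)).toSubmodule ≤ ⨆ n, leftNormedSpan V n :=
  LieSubalgebra.lieSpan_le (K := { toSubmodule := ⨆ n, leftNormedSpan V n
                                   lie_mem' := lie_mem_iSup_leftNormedSpan }) |>.2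
    fun _ hv => Submodule.mem_iSup_of_mem 0 hv

theorem leftNormedSpan_eq_bot_of_le {n m : ℕ} (hn : leftNormedSpan V n = ⊥) (hnm : n ≤ m) :
    leftNormedSpan V m = ⊥ := by
  induction m, hnm using Nat.le_induction with
  | base => exact hn
  | succ m _ ih => rw [leftNormedSpan, ih, Submodule.map₂_bot_left]

theorem fg_leftNormedSpan (hV : V.FG) (n : ℕ) : (leftNormedSpan V n).FG := by
  induction n with
  | zero => exact hV
  | succ n ih => exact ih.map₂ _ hV

theorem finite_of_leftNormedSpan_eq_bot (hV : V.FG)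
    (hgen : LieSubalgebra.lieSpan R L (V : Set L) = ⊤) {n : ℕ} (hn : leftNormedSpan V n = ⊥) :
    Module.Finite R L := by
  have htop : ⊤ ≤ ⨆ m : Fin n, leftNormedSpan V m := calc
    ⊤ = (LieSubalgebra.lieSpan R L (V : Set L)).toSubmodule := by rw [hgen]; rfl
    _ ≤ ⨆ m, leftNormedSpan V m := lieSpan_le_iSup_leftNormedSpan
    _ ≤ ⨆ m : Fin n, leftNormedSpan V m := iSup_le fun m => by
      rcases lt_or_ge m n with hm | hm
      · exact le_iSup (fun m : Fin n => leftNormedSpan V m) ⟨m, hm⟩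
      · simp [leftNormedSpan_eq_bot_of_le hn hm]
  exact Module.finite_def.2 (top_le_iff.1 htop ▸ Submodule.fg_iSup _ fun m => fg_leftNormedSpan hV m)

theorem leftNormedSpan_le_of_lie_mem {C : ℕ → Submodule R L}
    (hC : ∀ i j : ℕ, ∀ u ∈ C i, ∀ v ∈ C j, ⁅u, v⁆ ∈ C (i + j)) (n : ℕ) :
    leftNormedSpan (C 1) n ≤ C (n + 1) := by
  induction n with
  | zero => exact le_rfl
  | succ n ih => exact Submodule.map₂_le.2 fun u hu a ha => hC (n + 1) 1 u (ih hu) a ha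

theorem leftNormedSpan_succ_eq_bot {n : ℕ} {w : L} (hn : leftNormedSpan V n ≤ R ∙ w)
    (hw : ∀ a ∈ V, ⁅w, a⁆ = 0) : leftNormedSpan V (n + 1) = ⊥ := by
  refine eq_bot_iff.2 (Submodule.map₂_le.2 fun u hu a ha => ?_)
  obtain ⟨c, rfl⟩ := Submodule.mem_span_singleton.1 (hn hu)
  change ⁅c • w, a⁆ ∈ (⊥ : Submodule R L)
  rw [smul_lie, hw a ha, smul_zero]
  exact zero_mem _

end LeftNormed

section TwoElements

variable {L : Type*} [LieRing L] {x y : L}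

-- Lemma names spell left-normed brackets: `yxxy` is `⁅⁅⁅y, x⁆, x⁆, y⁆`.

theorem yxy_eq_zero (h : ⁅y, ⁅y, x⁆⁆ = 0) : ⁅⁅y, x⁆, y⁆ = 0 := by
  rw [← lie_skew, h, neg_zero]

theorem yxxy_eq_zero (h : ⁅y, ⁅y, x⁆⁆ = 0) : ⁅⁅⁅y, x⁆, x⁆, y⁆ = 0 := by
  rw [lie_lie, yxy_eq_zero h, ← lie_skew x y, lie_neg, lie_self, lie_zero, neg_zero, sub_zero]

theorem yxxxy_eq_neg_lie (h : ⁅y, ⁅y, x⁆⁆ = 0) :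
    ⁅⁅⁅⁅y, x⁆, x⁆, x⁆, y⁆ = -⁅⁅⁅y, x⁆, x⁆, ⁅y, x⁆⁆ := by
  rw [lie_lie, yxxy_eq_zero h, ← lie_skew x y, lie_neg, lie_zero, sub_zero]

theorem yxxxyy_eq_zero (h : ⁅y, ⁅y, x⁆⁆ = 0) : ⁅⁅⁅⁅⁅y, x⁆, x⁆, x⁆, y⁆, y⁆ = 0 := by
  rw [yxxxy_eq_neg_lie h, neg_lie, lie_lie, yxy_eq_zero h, yxxy_eq_zero h, lie_zero, lie_zero,
    sub_zero, neg_zero]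

theorem yxxxxy_eq_two_nsmul_yxxxyx (h : ⁅y, ⁅y, x⁆⁆ = 0) :
    ⁅⁅⁅⁅⁅y, x⁆, x⁆, x⁆, x⁆, y⁆ = 2 • ⁅⁅⁅⁅⁅y, x⁆, x⁆, x⁆, y⁆, x⁆ := by
  have hyxxx_yx : ⁅⁅⁅⁅y, x⁆, x⁆, x⁆, ⁅y, x⁆⁆ = ⁅x, ⁅⁅⁅⁅y, x⁆, x⁆, x⁆, y⁆⁆ := by
    rw [lie_lie, ← lie_skew x ⁅y, x⁆, lie_neg, lie_self, neg_zero, zero_sub,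
      ← neg_eq_iff_eq_neg.2 (yxxxy_eq_neg_lie h), lie_neg, neg_neg]
  rw [lie_lie, ← lie_skew x y, lie_neg, hyxxx_yx, ← lie_skew x ⁅⁅⁅⁅y, x⁆, x⁆, x⁆, y⁆, two_nsmul]
  abel

theorem yxxxyx_eq_zero_of_smul_eq {F : Type*} [Field F] [LieAlgebra F L]
    (h2 : ringChar F ≠ 2) (h : ⁅y, ⁅y, x⁆⁆ = 0) {c : F}
    (hc : c • ⁅⁅⁅⁅y, x⁆, x⁆, x⁆, y⁆ = ⁅⁅⁅⁅y, x⁆, x⁆, x⁆, x⁆) :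
    ⁅⁅⁅⁅⁅y, x⁆, x⁆, x⁆, y⁆, x⁆ = 0 := by
  have h2w : (2 : F) • ⁅⁅⁅⁅⁅y, x⁆, x⁆, x⁆, y⁆, x⁆ = 0 := by
    rw [two_smul, ← two_nsmul, ← yxxxxy_eq_two_nsmul_yxxxyx h, ← hc, smul_lie, yxxxyy_eq_zero h,
      smul_zero]
  exact (smul_eq_zero.1 h2w).resolve_left (Ring.two_ne_zero h2)

end TwoElements

theorem thin_yxxxy_general {F L : Type*} [Field F] [LieRing L] [LieAlgebra F L]
    (h2 : ringChar F ≠ 2)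
    {C : ℕ → Submodule F L} (hthin : IsThinGraded F L C)
    {y : L} (hy1 : y ∈ C 1) (hyc : ∀ v ∈ C 2, ⁅y, v⁆ = 0)
    (h5 : Module.finrank F (C 5) = 1)
    {x : L} (hx1 : x ∈ C 1) (hbasis : Submodule.span F {x, y} = C 1) :
    ⁅⁅⁅⁅y, x⁆, x⁆, x⁆, y⁆ = 0 := by
  by_contra hw
  set w := ⁅⁅⁅⁅y, x⁆, x⁆, x⁆, y⁆
  have hyx : ⁅y, x⁆ ∈ C 2 := hthin.bracket_mem 1 1 y hy1 x hx1
  have hyyx : ⁅y, ⁅y, x⁆⁆ = 0 := hyc _ hyx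
  have hyxxx : ⁅⁅⁅y, x⁆, x⁆, x⁆ ∈ C 4 :=
    hthin.bracket_mem 3 1 _ (hthin.bracket_mem 2 1 _ hyx x hx1) x hx1
  have hC5 : C 5 = F ∙ w :=
    eq_span_singleton_of_mem_of_finrank_eq_one h5 (hthin.bracket_mem 4 1 _ hyxxx y hy1) hw
  obtain ⟨c, hc⟩ := Submodule.mem_span_singleton.1 (hC5 ▸ hthin.bracket_mem 4 1 _ hyxxx x hx1)
  have hwC1 : ∀ a ∈ C 1, ⁅w, a⁆ = 0 := by
    rw [← hbasis]
    refine fun a ha => (Submodule.span_le (p := LinearMap.ker (LieAlgebra.ad F L w))).2 ?_ ha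
    rintro _ (rfl | rfl)
    exacts [yxxxyx_eq_zero_of_smul_eq h2 hyyx hc, yxxxyy_eq_zero hyyx]
  have h6 : leftNormedSpan (C 1) 5 = ⊥ :=
    leftNormedSpan_succ_eq_bot ((leftNormedSpan_le_of_lie_mem hthin.bracket_mem 4).trans hC5.le)
      hwC1
  exact hthin.infinite_dim (finite_of_leftNormedSpan_eq_bot
    (Module.Finite.iff_fg.1 (Module.finite_of_finrank_eq_succ hthin.dim_one)) hthin.generates h6)

/-- With `dim L₃ = dim L₅ = 1`, one has `[yxxxy] = 0`. -/
theorem thin_yxxxy {F L : Type*} [Field F] [LieRing L] [LieAlgebra F L]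
    (hp : ringChar F ≠ 0) (h2 : ringChar F ≠ 2)
    {C : ℕ → Submodule F L} (hthin : IsThinGraded F L C)
    (h3 : Module.finrank F (C 3) = 1)
    {y : L} (hy1 : y ∈ C 1) (hy0 : y ≠ 0) (hyc : ∀ v ∈ C 2, ⁅y, v⁆ = 0)
    (h5 : Module.finrank F (C 5) = 1)
    {x : L} (hx1 : x ∈ C 1) (hbasis : Submodule.span F {x, y} = C 1) :
    ⁅⁅⁅⁅y, x⁆, x⁆, x⁆, y⁆ = 0 :=
  thin_yxxxy_general h2 hthin hy1 hyc h5 hx1 hbasis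
end

section
/- Let L be a thin Lie algebra over a field of odd characteristic with dim(L_3) = 1 and dim(L_5) = 1, and let y span C_{L_1}(L_2). Then [L y y] = 0, i.e. (ad y)^2 = 0 on L, so y is a sandwich element. -/
open Module

/-!
Write `L₁ = span {x, y}` and `v = [x, y]`, so that `[v, y] = 0`. From
`(ad y)² [u, a] = [(ad y)² u, a] + 2 [[u, y], [a, y]] + [u, (ad y)² a]` one proves by induction on
`n` that `(ad y)²` kills `Lₙ` and that `[[Lₙ, y], v] = 0`. For the second claim, if
`[[u, y], v] ≠ 0` with `u ∈ Lₙ`, then `y` centralizes neither `Lₙ` nor `Lₙ₊₁` (the latter as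
`char F ≠ 2`), and by the covering property this forces `y` to centralize `Lₙ₋₁` and `Lₙ₋₂`.
Then `Lₙ` is spanned by `[[q, x], x]` for some `q ∈ Lₙ₋₂`, and `[[u, y], v]` is a multiple of
`[[q, w], v] = 0`, where `w = [v, x]`. Finally `[w, v] = 0`: otherwise `dim L₅ = 1` and
`char F ≠ 2` give `[[w, v], x] = 0`, so `L₆ = 0`.
-/

section LieIdentities

variable {L : Type*} [LieRing L]

theorem lie_lie_right_leibniz (a b c : L) : ⁅⁅a, b⁆, c⁆ = ⁅⁅a, c⁆, b⁆ + ⁅a, ⁅b, c⁆⁆ := by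
  rw [leibniz_lie, ← lie_skew ⁅a, c⁆ b]
  abel

theorem lie_lie_right_leibniz_two (a b c : L) :
    ⁅⁅⁅a, b⁆, c⁆, c⁆ = ⁅⁅⁅a, c⁆, c⁆, b⁆ + 2 • ⁅⁅a, c⁆, ⁅b, c⁆⁆ + ⁅a, ⁅⁅b, c⁆, c⁆⁆ := by
  rw [lie_lie_right_leibniz a b c, add_lie, lie_lie_right_leibniz ⁅a, c⁆ b c,
    lie_lie_right_leibniz a ⁅b, c⁆ c]
  abel

end LieIdentities

theorem eq_zero_of_add_self_eq_zero {R M : Type*} [DivisionRing R] [AddCommGroup M] [Module R M]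
    (h2 : (2 : R) ≠ 0) {a : M} (h : a + a = 0) : a = 0 :=
  (smul_eq_zero.mp (by rwa [two_smul])).resolve_left h2

theorem lie_lie_xy_eq_zero_of_lie_lie_eq_zero {F L : Type*} [Field F] [LieRing L]
    [LieAlgebra F L] (h2 : (2 : F) ≠ 0) {u x y : L} (hyv : ⁅y, ⁅x, y⁆⁆ = 0)
    (huyy : ⁅⁅u, y⁆, y⁆ = 0) (huxy : ⁅⁅u, x⁆, y⁆ = 0) : ⁅⁅u, y⁆, ⁅x, y⁆⁆ = 0 := by
  have e1 : ⁅u, ⁅x, y⁆⁆ = -⁅⁅u, y⁆, x⁆ :=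
    eq_neg_of_add_eq_zero_right (by rw [← lie_lie_right_leibniz, huxy])
  have e2 : ⁅⁅u, y⁆, ⁅x, y⁆⁆ = ⁅⁅u, ⁅x, y⁆⁆, y⁆ := by
    rw [lie_lie_right_leibniz u y, hyv, lie_zero, add_zero]
  have e3 : ⁅⁅⁅u, y⁆, x⁆, y⁆ = ⁅⁅u, y⁆, ⁅x, y⁆⁆ := by
    rw [lie_lie_right_leibniz _ x y, huyy, zero_lie, zero_add]
  refine eq_zero_of_add_self_eq_zero h2 ?_
  conv_lhs => arg 2; rw [e2, e1, neg_lie, e3]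
  exact add_neg_cancel _

theorem lie_lie_eq_zero_of_mem_span_pair {F L : Type*} [Field F] [LieRing L] [LieAlgebra F L]
    {x y z : L} (hvy : ⁅⁅x, y⁆, y⁆ = 0) (hz : z ∈ Submodule.span F {x, y}) :
    ⁅⁅z, y⁆, y⁆ = 0 ∧ ⁅⁅z, y⁆, ⁅x, y⁆⁆ = 0 := by
  obtain ⟨a, b, rfl⟩ := Submodule.mem_span_pair.mp hz
  simp [hvy]

theorem Submodule.exists_eq_span_pair {K V : Type*} [Field K] [AddCommGroup V] [Module K V]
    {W : Submodule K V} (hW : finrank K W = 2) {y : V} (hy : y ∈ W) (hy0 : y ≠ 0) :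
    ∃ x ∈ W, W = span K {x, y} := by
  have : FiniteDimensional K W := Module.finite_of_finrank_pos (by omega)
  have hlt : K ∙ y < W := by
    refine lt_of_le_of_ne ((span_singleton_le_iff_mem _ _).mpr hy) fun h => ?_
    have := finrank_span_singleton (K := K) hy0
    rw [h, hW] at this
    omega
  obtain ⟨x, hx, hxy⟩ := SetLike.exists_of_lt hlt
  refine ⟨x, hx, (eq_of_le_of_finrank_le (span_le.mpr ?_) ?_).symm⟩
  · rintro z (rfl | rfl) <;> assumption
  · have : FiniteDimensional K (span K {x, y}) :=
      FiniteDimensional.span_of_finite K (Set.toFinite _)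
    have hlt' : K ∙ y < span K {x, y} :=
      lt_of_le_of_ne (span_mono (by simp)) fun h => hxy (h ▸ subset_span (by simp))
    have := Submodule.finrank_lt_finrank_of_lt hlt'
    rw [finrank_span_singleton hy0] at this
    omega

theorem Submodule.eq_top_of_lieSpan_eq_top {R L : Type*} [CommRing R] [LieRing L]
    [LieAlgebra R L] {s : Set L} (hs : LieSubalgebra.lieSpan R L s = ⊤) {S : Submodule R L}
    (hsS : s ⊆ S) (hS : ∀ z ∈ S, ∀ a ∈ s, ⁅z, a⁆ ∈ S) : S = ⊤ := by
  have hN : ∀ a ∈ LieSubalgebra.lieSpan R L s, ∀ z ∈ S, ⁅z, a⁆ ∈ S := by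
    intro a ha
    induction ha using LieSubalgebra.lieSpan_induction with
    | mem a ha => exact fun z hz => hS z hz a ha
    | zero => simp
    | add a b _ _ iha ihb =>
      exact fun z hz => by rw [lie_add]; exact S.add_mem (iha z hz) (ihb z hz)
    | smul t a _ iha => exact fun z hz => by rw [lie_smul]; exact S.smul_mem t (iha z hz)
    | lie a b _ _ iha ihb =>
      intro z hz
      rw [leibniz_lie, ← lie_skew a ⁅z, b⁆]
      exact S.add_mem (ihb _ (iha z hz)) (S.neg_mem (iha _ (ihb z hz)))
  let K : LieSubalgebra R L :=
    { S with lie_mem' := fun {a b} ha hb => hN b (by rw [hs]; trivial) a ha }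
  have hK : LieSubalgebra.lieSpan R L s ≤ K := LieSubalgebra.lieSpan_le.mpr hsS
  rw [hs] at hK
  exact eq_top_iff.mpr fun z _ => hK (LieSubalgebra.mem_top z)

namespace IsThinGraded

variable {F L : Type*} [Field F] [LieRing L] [LieAlgebra F L] {C : ℕ → Submodule F L}
  (hC : IsThinGraded F L C)
include hC

theorem eq_map_ad {i : ℕ} {z : L} (hz : z ∈ C i) (hz0 : z ≠ 0) :
    C (i + 1) = (C 1).map (LieAlgebra.ad F L z) := by
  rw [← hC.covering i z hz hz0]
  conv_rhs => rw [← Submodule.span_eq (C 1), ← Submodule.span_image]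
  congr 1
  ext w
  simp [eq_comm]

theorem eq_span_lie_pair {x y : L} (hxy : C 1 = Submodule.span F {x, y}) {i : ℕ} {z : L}
    (hz : z ∈ C i) (hz0 : z ≠ 0) : C (i + 1) = Submodule.span F {⁅z, x⁆, ⁅z, y⁆} := by
  rw [hC.eq_map_ad hz hz0, hxy, Submodule.map_span, Set.image_pair]
  rfl

theorem eq_span_singleton_lie {x y : L} (hxy : C 1 = Submodule.span F {x, y}) {i : ℕ} {z : L}
    (hz : z ∈ C i) (hz0 : z ≠ 0) (hzy : ⁅z, y⁆ = 0) : C (i + 1) = F ∙ ⁅z, x⁆ := by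
  rw [hC.eq_span_lie_pair hxy hz hz0, hzy, Set.pair_comm, Submodule.span_insert_zero]

theorem ne_bot {i : ℕ} (hi : 1 ≤ i) : C i ≠ ⊥ := by
  induction i using Nat.strong_induction_on with
  | _ i ih =>
  intro hbot
  obtain rfl | hi1 := hi.eq_or_lt
  · have := hC.dim_one
    rw [hbot, finrank_bot] at this
    omega
  have hfin : ∀ j : Fin i, Module.Finite F (C j) := by
    have h1 : Module.Finite F (C 1) := Module.finite_of_finrank_pos (by rw [hC.dim_one]; norm_num)
    rintro ⟨j, hj⟩
    match j with
    | 0 => rw [hC.zero_bot]; infer_instance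
    | 1 => exact h1
    | k + 2 =>
      obtain ⟨z, hz, hz0⟩ := (Submodule.ne_bot_iff _).mp (ih (k + 1) (by omega) (by omega))
      show Module.Finite F (C (k + 1 + 1))
      rw [hC.eq_map_ad hz hz0]
      infer_instance
  have htop : ⨆ j : Fin i, C j = ⊤ := by
    refine Submodule.eq_top_of_lieSpan_eq_top hC.generates
      (le_iSup (fun j : Fin i => C j) ⟨1, hi1⟩) fun z hz a ha => ?_
    refine Submodule.iSup_induction (fun j : Fin i => C j)
      (motive := fun z => ⁅z, a⁆ ∈ ⨆ j : Fin i, C j) hz (fun j z hz => ?_) (by simp)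
      fun z₁ z₂ h₁ h₂ => by rw [add_lie]; exact add_mem h₁ h₂
    have hza := hC.bracket_mem j 1 z hz a ha
    by_cases hj : (j : ℕ) + 1 < i
    · exact le_iSup (fun j : Fin i => C j) ⟨j + 1, hj⟩ hza
    · rw [show (j : ℕ) + 1 = i by omega, hbot, Submodule.mem_bot] at hza
      rw [hza]
      exact zero_mem _
  have : Module.Finite F ↥(⨆ j : Fin i, C j) := inferInstance
  rw [htop] at this
  exact hC.infinite_dim (Module.Finite.equiv Submodule.topEquiv)

theorem exists_ne_zero {i : ℕ} (hi : 1 ≤ i) : ∃ z ∈ C i, z ≠ 0 :=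
  (Submodule.ne_bot_iff _).mp (hC.ne_bot hi)

section Sandwich

variable {x y : L} (hxy : C 1 = Submodule.span F {x, y})
include hxy

theorem lie_eq_zero_of_mem_succ {j : ℕ} {r : L} (hr : r ∈ C j) (hr0 : r ≠ 0)
    (hry : ⁅r, y⁆ = 0) (hrv : ⁅r, ⁅x, y⁆⁆ = 0) : ∀ z ∈ C (j + 1), ⁅z, y⁆ = 0 := by
  intro z hz
  rw [hC.eq_span_singleton_lie hxy hr hr0 hry] at hz
  obtain ⟨a, rfl⟩ := Submodule.mem_span_singleton.mp hz
  rw [smul_lie, lie_lie_right_leibniz, hry, hrv, zero_lie, zero_add, smul_zero]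

theorem lie_lie_eq_zero_of_mem_succ (hvy : ⁅⁅x, y⁆, y⁆ = 0) {m : ℕ} {u : L} (hu : u ∈ C m)
    (hu0 : u ≠ 0) (hA : ∀ z ∈ C m, ⁅⁅z, y⁆, y⁆ = 0) (hB : ∀ z ∈ C m, ⁅⁅z, y⁆, ⁅x, y⁆⁆ = 0) :
    ∀ z ∈ C (m + 1), ⁅⁅z, y⁆, y⁆ = 0 := by
  intro z hz
  rw [hC.eq_span_lie_pair hxy hu hu0] at hz
  obtain ⟨a, b, rfl⟩ := Submodule.mem_span_pair.mp hz
  simp only [add_lie, smul_lie, lie_lie_right_leibniz_two u x y, hA u hu, hB u hu, hvy, zero_lie,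
    lie_zero, smul_zero, add_zero]

theorem lie_eq_zero_of_exists_lie_ne_zero {j : ℕ} (hA : ∀ z ∈ C j, ⁅⁅z, y⁆, y⁆ = 0)
    (hB : ∀ z ∈ C j, ⁅⁅z, y⁆, ⁅x, y⁆⁆ = 0) (hne : ∃ z ∈ C (j + 2), ⁅z, y⁆ ≠ 0) :
    ∀ p ∈ C j, ⁅p, y⁆ = 0 := by
  have hy : y ∈ C 1 := hxy ▸ Submodule.subset_span (by simp)
  intro p hp
  by_contra hr0
  obtain ⟨z, hz, hzy⟩ := hne
  exact hzy (hC.lie_eq_zero_of_mem_succ hxy (hC.bracket_mem j 1 p hp y hy) hr0 (hA p hp)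
    (hB p hp) z hz)

theorem lie_lie_xy_eq_zero_of_lie_eq_zero (hwv : ⁅⁅⁅x, y⁆, x⁆, ⁅x, y⁆⁆ = 0) {m : ℕ} (hm : 1 ≤ m)
    (h0 : ∀ z ∈ C m, ⁅z, y⁆ = 0) (h1 : ∀ z ∈ C (m + 1), ⁅z, y⁆ = 0) :
    ∀ u ∈ C (m + 2), ⁅⁅u, y⁆, ⁅x, y⁆⁆ = 0 := by
  have hx : x ∈ C 1 := hxy ▸ Submodule.subset_span (by simp)
  intro u hu
  obtain ⟨q, hq, hq0⟩ := hC.exists_ne_zero hm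
  have hp : ⁅q, x⁆ ∈ C (m + 1) := hC.bracket_mem m 1 q hq x hx
  have hp0 : ⁅q, x⁆ ≠ 0 := fun h => hC.ne_bot (by omega : 1 ≤ m + 1)
    (by rw [hC.eq_span_singleton_lie hxy hq hq0 (h0 q hq), h, Submodule.span_zero_singleton])
  rw [hC.eq_span_singleton_lie hxy hp hp0 (h1 _ hp)] at hu
  obtain ⟨c, rfl⟩ := Submodule.mem_span_singleton.mp hu
  have hqv : ⁅q, ⁅x, y⁆⁆ = 0 := by rw [leibniz_lie, h1 _ hp, h0 q hq, lie_zero, add_zero]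
  rw [smul_lie, smul_lie, lie_lie_right_leibniz ⁅q, x⁆ x y, h1 _ hp, zero_lie, zero_add,
    lie_lie_right_leibniz q x ⁅x, y⁆, hqv, zero_lie, zero_add, ← lie_skew x ⁅x, y⁆, lie_neg,
    neg_lie, lie_lie_right_leibniz q, hqv, zero_lie, zero_add, hwv, lie_zero, neg_zero, smul_zero]

theorem lie_lie_xy_x_lie_xy_eq_zero (h2 : (2 : F) ≠ 0) (hvy : ⁅⁅x, y⁆, y⁆ = 0)
    (h5 : finrank F (C 5) = 1) : ⁅⁅⁅x, y⁆, x⁆, ⁅x, y⁆⁆ = 0 := by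
  have hx : x ∈ C 1 := hxy ▸ Submodule.subset_span (by simp)
  have hy : y ∈ C 1 := hxy ▸ Submodule.subset_span (by simp)
  have hv : ⁅x, y⁆ ∈ C 2 := hC.bracket_mem 1 1 x hx y hy
  have hw : ⁅⁅x, y⁆, x⁆ ∈ C 3 := hC.bracket_mem 2 1 _ hv x hx
  have hs : ⁅⁅⁅x, y⁆, x⁆, ⁅x, y⁆⁆ ∈ C 5 := hC.bracket_mem 3 2 _ hw _ hv
  have hr : ⁅⁅⁅⁅x, y⁆, x⁆, x⁆, x⁆ ∈ C 5 := hC.bracket_mem 4 1 _ (hC.bracket_mem 3 1 _ hw x hx) x hx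
  have hwy : ⁅⁅⁅x, y⁆, x⁆, y⁆ = 0 := by
    rw [lie_lie_right_leibniz, hvy, zero_lie, lie_self, zero_add]
  have hsy : ⁅⁅⁅⁅x, y⁆, x⁆, ⁅x, y⁆⁆, y⁆ = 0 := by
    rw [lie_lie_right_leibniz, hwy, zero_lie, hvy, lie_zero, add_zero]
  -- with `w = [[x, y], x]` and `s = [w, [x, y]]`: `[[[w, x], x], y] = 2 [s, x]` and `[s, y] = 0`
  have hry : ⁅⁅⁅⁅⁅x, y⁆, x⁆, x⁆, x⁆, y⁆ =
      ⁅⁅⁅⁅x, y⁆, x⁆, ⁅x, y⁆⁆, x⁆ + ⁅⁅⁅⁅x, y⁆, x⁆, ⁅x, y⁆⁆, x⁆ := by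
    rw [lie_lie_right_leibniz ⁅⁅⁅x, y⁆, x⁆, x⁆ x y, lie_lie_right_leibniz ⁅⁅x, y⁆, x⁆ x y, hwy,
      zero_lie, zero_add, lie_lie_right_leibniz ⁅⁅x, y⁆, x⁆ x ⁅x, y⁆, ← lie_skew x ⁅x, y⁆,
      lie_neg, lie_self, neg_zero, add_zero]
  by_contra hs0
  have : FiniteDimensional F (C 5) := Module.finite_of_finrank_pos (by omega)
  have hC5 : C 5 = F ∙ ⁅⁅⁅x, y⁆, x⁆, ⁅x, y⁆⁆ :=
    (Submodule.eq_of_le_of_finrank_le ((Submodule.span_singleton_le_iff_mem _ _).mpr hs)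
      (by rw [h5, finrank_span_singleton hs0])).symm
  rw [hC5] at hr
  obtain ⟨c, hc⟩ := Submodule.mem_span_singleton.mp hr
  have hsx : ⁅⁅⁅⁅x, y⁆, x⁆, ⁅x, y⁆⁆, x⁆ = 0 :=
    eq_zero_of_add_self_eq_zero h2 (by rw [← hry, ← hc, smul_lie, hsy, smul_zero])
  exact hC.ne_bot (i := 5 + 1) (by norm_num)
    (by rw [hC.eq_span_singleton_lie hxy hs hs0 hsy, hsx, Submodule.span_zero_singleton])

theorem lie_lie_xy_eq_zero_of_mem_add_two (h2 : (2 : F) ≠ 0) (hyv : ⁅y, ⁅x, y⁆⁆ = 0)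
    (hwv : ⁅⁅⁅x, y⁆, x⁆, ⁅x, y⁆⁆ = 0) {m : ℕ} (hm : 1 ≤ m)
    (hA₀ : ∀ z ∈ C m, ⁅⁅z, y⁆, y⁆ = 0) (hB₀ : ∀ z ∈ C m, ⁅⁅z, y⁆, ⁅x, y⁆⁆ = 0)
    (hA₁ : ∀ z ∈ C (m + 1), ⁅⁅z, y⁆, y⁆ = 0) (hB₁ : ∀ z ∈ C (m + 1), ⁅⁅z, y⁆, ⁅x, y⁆⁆ = 0)
    (hA₂ : ∀ z ∈ C (m + 2), ⁅⁅z, y⁆, y⁆ = 0) : ∀ u ∈ C (m + 2), ⁅⁅u, y⁆, ⁅x, y⁆⁆ = 0 := by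
  have hx : x ∈ C 1 := hxy ▸ Submodule.subset_span (by simp)
  intro u hu
  by_contra huv
  have hne₂ : ∃ z ∈ C (m + 2), ⁅z, y⁆ ≠ 0 := ⟨u, hu, fun h => huv (by rw [h, zero_lie])⟩
  have hne₃ : ∃ z ∈ C (m + 3), ⁅z, y⁆ ≠ 0 := ⟨⁅u, x⁆, hC.bracket_mem _ 1 u hu x hx,
    fun h => huv (lie_lie_xy_eq_zero_of_lie_lie_eq_zero h2 hyv (hA₂ u hu) h)⟩
  exact huv (hC.lie_lie_xy_eq_zero_of_lie_eq_zero hxy hwv hm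
    (hC.lie_eq_zero_of_exists_lie_ne_zero hxy hA₀ hB₀ hne₂)
    (hC.lie_eq_zero_of_exists_lie_ne_zero hxy hA₁ hB₁ hne₃) u hu)

theorem lie_lie_eq_zero_and_lie_lie_xy_eq_zero (h2 : (2 : F) ≠ 0) (hy0 : y ≠ 0)
    (hyv : ⁅y, ⁅x, y⁆⁆ = 0) (hwv : ⁅⁅⁅x, y⁆, x⁆, ⁅x, y⁆⁆ = 0) (n : ℕ) :
    (∀ z ∈ C n, ⁅⁅z, y⁆, y⁆ = 0) ∧ ∀ z ∈ C n, ⁅⁅z, y⁆, ⁅x, y⁆⁆ = 0 := by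
  have hy : y ∈ C 1 := hxy ▸ Submodule.subset_span (by simp)
  have hvy : ⁅⁅x, y⁆, y⁆ = 0 := by rw [← lie_skew, hyv, neg_zero]
  induction n using Nat.strong_induction_on with
  | _ n ih =>
  match n with
  | 0 => simp only [hC.zero_bot, Submodule.mem_bot, forall_eq, zero_lie, and_self]
  | 1 =>
    rw [hxy]
    exact ⟨fun z hz => (lie_lie_eq_zero_of_mem_span_pair hvy hz).1,
      fun z hz => (lie_lie_eq_zero_of_mem_span_pair hvy hz).2⟩
  | 2 =>
    have hD := hC.lie_eq_zero_of_mem_succ hxy hy hy0 (lie_self y) hyv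
    exact ⟨fun z hz => by rw [hD z hz, zero_lie], fun z hz => by rw [hD z hz, zero_lie]⟩
  | m + 3 =>
    obtain ⟨u, hu, hu0⟩ := hC.exists_ne_zero (by omega : 1 ≤ m + 2)
    have hA := hC.lie_lie_eq_zero_of_mem_succ hxy hvy hu hu0 (ih (m + 2) (by omega)).1
      (ih (m + 2) (by omega)).2
    exact ⟨hA, hC.lie_lie_xy_eq_zero_of_mem_add_two hxy h2 hyv hwv (by omega)
      (ih (m + 1) (by omega)).1 (ih (m + 1) (by omega)).2 (ih (m + 2) (by omega)).1
      (ih (m + 2) (by omega)).2 hA⟩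

end Sandwich

end IsThinGraded

theorem thin_sandwich_odd_general {F L : Type*} [Field F] [LieRing L] [LieAlgebra F L]
    (h2 : ringChar F ≠ 2)
    {C : ℕ → Submodule F L} (hthin : IsThinGraded F L C)
    {y : L} (hy1 : y ∈ C 1) (hy0 : y ≠ 0) (hyc : ∀ v ∈ C 2, ⁅y, v⁆ = 0)
    (h5 : Module.finrank F (C 5) = 1) :
    ∀ z : L, ⁅⁅z, y⁆, y⁆ = 0 := by
  obtain ⟨x, hx1, hxy⟩ := Submodule.exists_eq_span_pair hthin.dim_one hy1 hy0
  have hF2 : (2 : F) ≠ 0 := Ring.two_ne_zero h2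
  have hyv : ⁅y, ⁅x, y⁆⁆ = 0 := hyc _ (hthin.bracket_mem 1 1 x hx1 y hy1)
  have hwv := hthin.lie_lie_xy_x_lie_xy_eq_zero hxy hF2
    (by rw [← lie_skew, hyv, neg_zero]) h5
  intro z
  have hz : z ∈ ⨆ n, C n := by rw [hthin.internal.submodule_iSup_eq_top]; trivial
  refine Submodule.iSup_induction C (motive := fun z => ⁅⁅z, y⁆, y⁆ = 0) hz
    (fun n => (hthin.lie_lie_eq_zero_and_lie_lie_xy_eq_zero hxy hF2 hy0 hyv hwv n).1)
    (by simp) fun a b ha hb => by rw [add_lie, add_lie, ha, hb, add_zero]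

/-- Main theorem in odd characteristic: in a thin Lie algebra with
`dim L₃ = dim L₅ = 1`, the element `y` spanning `C_{L₁}(L₂)` satisfies
`(ad y)² = 0`, i.e. `y` is a sandwich element. -/
theorem thin_sandwich_odd {F L : Type*} [Field F] [LieRing L] [LieAlgebra F L]
    (hp : ringChar F ≠ 0) (h2 : ringChar F ≠ 2)
    {C : ℕ → Submodule F L} (hthin : IsThinGraded F L C)
    (h3 : Module.finrank F (C 3) = 1)
    {y : L} (hy1 : y ∈ C 1) (hy0 : y ≠ 0) (hyc : ∀ v ∈ C 2, ⁅y, v⁆ = 0)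
    (h5 : Module.finrank F (C 5) = 1) :
    ∀ z : L, ⁅⁅z, y⁆, y⁆ = 0 :=
  thin_sandwich_odd_general h2 hthin hy1 hy0 hyc h5
end
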